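/- Let σ0 ≤ σ in S_k (Bruhat order) and let i be an index with σ(i) = σ0(i). Let T_i = {t ∈ T : t(i) ≠ i} and ℓ_i(σ) = #{r < i : σ(r) > σ(i)} + #{r > i : σ(r) < σ(i)}. Then #{t ∈ T_i : σ0·t ≤ σ} ≥ ℓ_i(σ). -/

import Mathlib

/-! ## Segments and multisegments -/

structure Segment where
  a : ℤ
  b : ℤ
  nonempty : a ≤ b

namespace Segment

/-- `Δ ≺ Δ'`. -/
def prec (Δ Δ' : Segment) : Prop :=
  Δ.a < Δ'.a ∧ Δ'.a ≤ Δ.b + 1 ∧ Δ.b < Δ'.b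

def linked (Δ Δ' : Segment) : Prop := prec Δ Δ' ∨ prec Δ' Δ

/-- `←Δ = [a-1, b-1]`. -/
def shiftl (Δ : Segment) : Segment :=
  ⟨Δ.a - 1, Δ.b - 1, by have := Δ.nonempty; omega⟩

end Segment

abbrev Multisegment := Multiset Segment

/-- `Step m n` means `m ⊢ n`: `m` is obtained from `n` by replacing a pair of linked
segments of `n` by its offspring. -/
def Step (m n : Multisegment) : Prop :=
  ∃ (Δ Δ' : Segment) (r : Multisegment),
    Segment.prec Δ Δ' ∧ n = Δ ::ₘ Δ' ::ₘ r ∧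
    ((Δ'.a ≤ Δ.b ∧ ∃ E F : Segment,
        E.a = Δ.a ∧ E.b = Δ'.b ∧ F.a = Δ'.a ∧ F.b = Δ.b ∧ m = E ::ₘ F ::ₘ r) ∨
     (Δ'.a = Δ.b + 1 ∧ ∃ E : Segment, E.a = Δ.a ∧ E.b = Δ'.b ∧ m = E ::ₘ r))

/-- `Obt m n` means `m ⊨ n`: reflexive-transitive closure of `⊢`. -/
def Obt : Multisegment → Multisegment → Prop := Relation.ReflTransGen Step

def PairwiseUnlinked (m : Multisegment) : Prop :=
  ∀ (Δ Δ' : Segment) (r : Multisegment), m = Δ ::ₘ Δ' ::ₘ r → ¬ Segment.linked Δ Δ'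

/-- `StepN l m n` : there is a chain of `l` steps `m = m_l ⊢ m_{l-1} ⊢ ⋯ ⊢ m_1 ⊢ n`. -/
def StepN : ℕ → Multisegment → Multisegment → Prop
  | 0, m, n => m = n
  | l + 1, m, n => ∃ p, Step m p ∧ StepN l p n

/-- The complexity `c(m)`: the maximal `l` for which there is a chain of `l` steps ending at `m`. -/
noncomputable def complexity (m : Multisegment) : ℕ :=
  sSup {l : ℕ | ∃ m', StepN l m' m}

/-- Almost pairwise unlinked. -/
def APU (m : Multisegment) : Prop :=
  ∃ m', PairwiseUnlinked m' ∧ Step m' m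

/-- The depth `d(m)`: the number of APU multisegments `n` with `n ⊨ m`. -/
noncomputable def depth (m : Multisegment) : ℕ :=
  {n : Multisegment | APU n ∧ Obt n m}.ncard

def Regular (m : Multisegment) : Prop :=
  (m.map Segment.a).Nodup ∧ (m.map Segment.b).Nodup

def IsBalanced (m : Multisegment) : Prop :=
  Regular m ∧ depth m = complexity m

/-! ## Enumerated multisegments and the (GLS) condition -/

/-- The multisegment `Δ_0 + ⋯ + Δ_{k-1}` attached to an enumeration `Δ : ℕ → Segment`. -/
def msOf (k : ℕ) (Δ : ℕ → Segment) : Multisegment :=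
  ↑((List.range k).map Δ)

def Xset (k : ℕ) (Δ : ℕ → Segment) : Set (ℕ × ℕ) :=
  {p | p.1 < k ∧ p.2 < k ∧ (Δ p.1).prec (Δ p.2)}

def Xtil (k : ℕ) (Δ : ℕ → Segment) : Set (ℕ × ℕ) :=
  {p | p.1 < k ∧ p.2 < k ∧ ((Δ p.1).shiftl).prec (Δ p.2)}

open Classical in
/-- The vector `x_{i,j}(λ) ∈ ℂ^{X̃_m}` (viewed inside the functions `ℕ × ℕ → ℂ`). -/
noncomputable def glsVec (k : ℕ) (Δ : ℕ → Segment) (lam : ℕ → ℕ → ℂ) (i j : ℕ) :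
    ℕ × ℕ → ℂ := fun p =>
  (if p.1 = i ∧ (p.2, j) ∈ Xset k Δ ∧ (i, p.2) ∈ Xtil k Δ then lam p.2 j else 0) -
  (if p.2 = j ∧ (p.1, j) ∈ Xtil k Δ ∧ (i, p.1) ∈ Xset k Δ then lam i p.1 else 0)

/-- Condition (GLS). -/
def GLS (k : ℕ) (Δ : ℕ → Segment) : Prop :=
  ∃ lam : ℕ → ℕ → ℂ,
    LinearIndependent ℂ (fun p : Xset k Δ => glsVec k Δ lam p.1.1 p.1.2)

/-- The relation `⤳` between `X_m` and `X̃_m`. -/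
def leadsTo (Δ : ℕ → Segment) (x y : ℕ × ℕ) : Prop :=
  (x.1 = y.1 ∧ (Δ y.2).prec (Δ x.2)) ∨ (x.2 = y.2 ∧ (Δ x.1).prec (Δ y.1))

/-- `N_{i,j} = {y ∈ X̃_m : (i,j) ⤳ y}`. -/
def Nset (k : ℕ) (Δ : ℕ → Segment) (x : ℕ × ℕ) : Set (ℕ × ℕ) :=
  {y ∈ Xtil k Δ | leadsTo Δ x y}

/-- The labelled relation `x ⤳^r y`. -/
def LabRel (k : ℕ) (Δ : ℕ → Segment) (x r y : ℕ × ℕ) : Prop :=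
  (x.1 = y.1 ∧ r = (y.2, x.2) ∧ x ∈ Xset k Δ ∧ r ∈ Xset k Δ ∧ y ∈ Xtil k Δ) ∨
  (x.2 = y.2 ∧ r = (x.1, y.1) ∧ x ∈ Xset k Δ ∧ r ∈ Xset k Δ ∧ y ∈ Xtil k Δ)

/-- Multisegments of type 4231. -/
def Type4231 (m : Multisegment) : Prop :=
  ∃ (k : ℕ) (Δ : ℕ → Segment), 4 ≤ k ∧ m = msOf k Δ ∧ Regular m ∧
    (∀ i j, i < j → j < k → (Δ j).b < (Δ i).b) ∧
    (∀ i, 2 ≤ i → i + 1 < k → (Δ (i + 1)).prec (Δ i)) ∧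
    (Δ 2).prec (Δ 0) ∧
    (Δ (k - 1)).a < (Δ 1).a ∧ (Δ 1).a < (Δ (k - 2)).a

/-- Multisegments of type 3412. -/
def Type3412 (m : Multisegment) : Prop :=
  ∃ (k : ℕ) (Δ : ℕ → Segment), 4 ≤ k ∧ m = msOf k Δ ∧ Regular m ∧
    (∀ i j, i < j → j < k → (Δ j).b < (Δ i).b) ∧
    (∀ i, 3 ≤ i → i + 1 < k → (Δ (i + 1)).prec (Δ i)) ∧
    (Δ 3).prec (Δ 1) ∧
    (Δ 2).a < (Δ (k - 1)).a ∧ (Δ (k - 1)).a < (Δ 0).a ∧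
    (Δ 0).a < (Δ (if k = 4 then 1 else k - 2)).a

/-- `Δ_i` is a detachable segment of `Δ_0 + ⋯ + Δ_{k-1}`. -/
def Detachable (k : ℕ) (Δ : ℕ → Segment) (i : ℕ) : Prop :=
  (∀ j, j < k → j ≠ i → ¬ (Δ i).prec (Δ j) ∧ ¬ ((Δ i).shiftl).prec (Δ j)) ∨
  (∀ j, j < k → j ≠ i → ¬ (Δ j).prec (Δ i) ∧ ¬ ((Δ j).shiftl).prec (Δ i))

/-! ## Permutations, Bruhat order, smooth pairs -/

/-- The rank function `r_σ(i,j)` (0-based). -/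
def rankFn {k : ℕ} (σ : Equiv.Perm (Fin k)) (i j : Fin k) : ℕ :=
  (Finset.univ.filter fun u : Fin k => u ≤ i ∧ σ u ≤ j).card

/-- The Bruhat order, via the rank-function characterization. -/
def BruhatLE {k : ℕ} (τ σ : Equiv.Perm (Fin k)) : Prop :=
  ∀ i j : Fin k, rankFn σ i j ≤ rankFn τ i j

/-- The length `ℓ(σ)`. -/
def lenPerm {k : ℕ} (σ : Equiv.Perm (Fin k)) : ℕ :=
  (Finset.univ.filter fun p : Fin k × Fin k => p.1 < p.2 ∧ σ p.2 < σ p.1).card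

def IsTransposition {k : ℕ} (t : Equiv.Perm (Fin k)) : Prop :=
  ∃ i j : Fin k, i ≠ j ∧ t = Equiv.swap i j

/-- `(σ, σ0)` is a smooth pair. -/
def SmoothPair {k : ℕ} (σ0 σ : Equiv.Perm (Fin k)) : Prop :=
  BruhatLE σ0 σ ∧
    {t : Equiv.Perm (Fin k) | IsTransposition t ∧ BruhatLE (σ0 * t) σ}.ncard = lenPerm σ

/-- The ascent set `D(σ)` of a permutation, in 1-based indexing. -/
def Dset {k : ℕ} (σ : Equiv.Perm (Fin k)) : Set ℕ :=
  {i | ∃ (h1 : 1 ≤ i) (h2 : i < k), (σ ⟨i - 1, by omega⟩ : ℕ) < (σ ⟨i, h2⟩ : ℕ)} ∪ {k}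

/-- The flattened permutation `rmv_i(σ)`. -/
def rmv {k : ℕ} (σ : Equiv.Perm (Fin (k + 1))) (i : Fin (k + 1)) : Equiv.Perm (Fin k) :=
  ((finSuccAboveEquiv i).trans
    (σ.subtypeEquiv fun x => not_congr (EmbeddingLike.apply_eq_iff_eq σ).symm)).trans
    (finSuccAboveEquiv (σ i)).symm

/-! ## Bi-sequences -/

structure BiSeq (k : ℕ) where
  a : Fin k → ℤ
  b : Fin k → ℤ
  mono_a : Monotone a
  anti_b : Antitone b
  compat : ∀ i : Fin k, a i.rev ≤ b i + 1

def RegularBS {k : ℕ} (A : BiSeq k) : Prop := StrictMono A.a ∧ StrictAnti A.b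

/-- `σ` satisfies the defining recursion of `σ0(A)`. -/
def Sigma0Spec {k : ℕ} (A : BiSeq k) (σ : Equiv.Perm (Fin k)) : Prop :=
  ∀ i : Fin k,
    A.a (σ.symm i) ≤ A.b i + 1 ∧
    ∀ j : Fin k, A.a j ≤ A.b i + 1 → (∀ i' : Fin k, i < i' → σ.symm i' ≠ j) →
      j ≤ σ.symm i

def Avoids213 {k : ℕ} (σ : Equiv.Perm (Fin k)) : Prop :=
  ¬ ∃ i j l : Fin k, i < j ∧ j < l ∧ σ j < σ i ∧ σ i < σ l

/-- The multisegment `m_σ(A)`, consisting of the nonempty intervals among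
`[a_{σ⁻¹(i)}, b_i]`. -/
def mOf {k : ℕ} (A : BiSeq k) (σ : Equiv.Perm (Fin k)) : Multisegment :=
  ((Finset.univ.filter fun i : Fin k => A.a (σ.symm i) ≤ A.b i).attach.val).map
    fun i => { a := A.a (σ.symm i.1), b := A.b i.1,
               nonempty := by have := Finset.mem_filter.mp i.2; exact this.2 }

/-! ## Permutation matrices -/

def PermMat {k : ℕ} (σ : Equiv.Perm (Fin k)) : Matrix (Fin k) (Fin k) ℕ :=
  fun i j => if σ i = j then 1 else 0

/-- The equivalence relation generated by `i ∼ j` whenever `M_{i,l} = M_{j,l} = 1` for some `l`. -/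
def matRel {k : ℕ} (M : Matrix (Fin k) (Fin k) ℕ) : Fin k → Fin k → Prop :=
  Relation.EqvGen (fun i j => ∃ l, M i l = 1 ∧ M j l = 1)

/-!
For `j < i`, `σ₀ * (i j)` exchanges the values at positions `j` and `i`. If `σ₀ j > σ₀ i` this
goes down in the Bruhat order, so `σ₀ * (i j) ≤ σ₀ ≤ σ`. If `σ₀ j < σ₀ i` it lowers the rank
function by one exactly on the rectangle `[j, i) × [σ₀ j, σ₀ i)`, so `σ₀ * (i j) ≤ σ` unless that
rectangle contains a tight point, where the rank functions of `σ₀` and `σ` agree. The bad `j` thus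
lie in the union of the lower-left quadrants of the tight points southwest of `(i, σ i)`. On a union
of quadrants with tight corners `σ₀` has no more points than `σ` (peel off the quadrant with the
rightmost corner and use the Bruhat inequalities on what is left), and `σ` has at most
`#{r < i | σ r < σ i}` points there; counting gives the bound for the transpositions `(i j)`,
`j < i`. Conjugation by the longest element preserves the Bruhat order and turns the transpositions
with `j > i` into this case.
-/

open Finset

section

variable {k : ℕ}

lemma card_filter_comp_perm {α : Type*} [Fintype α] (e : Equiv.Perm α) (p : α → Prop)
    [DecidablePred p] : #{a | p (e a)} = #{a | p a} := by
  simp only [card_filter]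
  exact Equiv.sum_comp e (fun a => if p a then 1 else 0)

instance (τ σ : Equiv.Perm (Fin k)) : Decidable (BruhatLE τ σ) :=
  inferInstanceAs (Decidable (∀ i j : Fin k, rankFn σ i j ≤ rankFn τ i j))

-- `rankFn` with exclusive bounds ranging over all of `ℕ`: empty quadrants need no special case.
def rankCount (π : Equiv.Perm (Fin k)) (P Q : ℕ) : ℕ :=
  #{u : Fin k | u.val < P ∧ (π u).val < Q}

lemma rankFn_eq_rankCount (π : Equiv.Perm (Fin k)) (p q : Fin k) :
    rankFn π p q = rankCount π (p + 1) (q + 1) := by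
  simp only [rankFn, rankCount, Fin.le_def, Nat.lt_succ_iff]

lemma rankCount_eq_min (π : Equiv.Perm (Fin k)) (P Q : ℕ) :
    rankCount π P Q = rankCount π (min P k) (min Q k) := by
  unfold rankCount
  congr 1
  exact filter_congr fun u _ => by omega

lemma bruhatLE_iff_rankCount_le {τ σ : Equiv.Perm (Fin k)} :
    BruhatLE τ σ ↔ ∀ P Q, rankCount σ P Q ≤ rankCount τ P Q := by
  refine ⟨fun h P Q => ?_, fun h p q => by simpa only [rankFn_eq_rankCount] using h _ _⟩
  rw [rankCount_eq_min σ, rankCount_eq_min τ]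
  obtain hP | hP := Nat.eq_zero_or_pos (min P k)
  · simp [hP, rankCount]
  obtain hQ | hQ := Nat.eq_zero_or_pos (min Q k)
  · simp [hQ, rankCount]
  have := h ⟨min P k - 1, by omega⟩ ⟨min Q k - 1, by omega⟩
  rwa [rankFn_eq_rankCount, rankFn_eq_rankCount, Nat.sub_add_cancel hP,
    Nat.sub_add_cancel hQ] at this

lemma BruhatLE.trans {ρ τ σ : Equiv.Perm (Fin k)} (h₁ : BruhatLE ρ τ) (h₂ : BruhatLE τ σ) :
    BruhatLE ρ σ := fun p q => (h₂ p q).trans (h₁ p q)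

lemma rankFn_eq_rankFn_mul_swap_add (π : Equiv.Perm (Fin k)) {a b : Fin k} (hab : a < b)
    (hπ : π a < π b) (p q : Fin k) :
    rankFn π p q = rankFn (π * Equiv.swap a b) p q +
      if a ≤ p ∧ p < b ∧ π a ≤ q ∧ q < π b then 1 else 0 := by
  unfold rankFn
  simp only [card_filter]
  rw [← sum_sdiff (subset_univ {a, b}), ← sum_sdiff (subset_univ {a, b}),
    sum_pair hab.ne, sum_pair hab.ne]
  have hrest : ∀ u ∈ univ \ {a, b},
      (if u ≤ p ∧ (π * Equiv.swap a b) u ≤ q then 1 else 0) = if u ≤ p ∧ π u ≤ q then 1 else 0 := by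
    intro u hu
    simp only [mem_sdiff, mem_univ, mem_insert, mem_singleton, true_and, not_or] at hu
    rw [Equiv.Perm.mul_apply, Equiv.swap_apply_of_ne_of_ne hu.1 hu.2]
  rw [sum_congr rfl hrest]
  simp only [Equiv.Perm.mul_apply, Equiv.swap_apply_left, Equiv.swap_apply_right]
  split_ifs <;> omega

lemma bruhatLE_mul_swap_of_gt (π : Equiv.Perm (Fin k)) {a b : Fin k} (hab : a < b)
    (hπ : π b < π a) : BruhatLE (π * Equiv.swap a b) π := by
  intro p q
  have h := rankFn_eq_rankFn_mul_swap_add (π * Equiv.swap a b) hab (by simpa using hπ) p q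
  rw [mul_assoc, Equiv.swap_mul_self, mul_one] at h
  omega

lemma bruhatLE_mul_swap_of_rankCount_lt {π σ : Equiv.Perm (Fin k)} (h : BruhatLE π σ)
    {a b : Fin k} (hab : a < b) (hπ : π a < π b)
    (hrect : ∀ P Q : ℕ, a.val < P → P ≤ b.val → (π a).val < Q → Q ≤ (π b).val →
      rankCount σ P Q < rankCount π P Q) :
    BruhatLE (π * Equiv.swap a b) σ := by
  intro p q
  have hp := rankFn_eq_rankFn_mul_swap_add π hab hπ p q
  split_ifs at hp with hpq
  · have := hrect (p + 1) (q + 1) (by omega) (by omega) (by omega) (by omega)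
    rw [← rankFn_eq_rankCount, ← rankFn_eq_rankCount] at this
    omega
  · exact (h p q).trans hp.le

-- The cutoff `Q₀` makes the induction in `card_stairRegion_le` work: removing the quadrant with the
-- rightmost corner `(P, Q)` leaves the part of the region above `Q`.
def stairRegion (π : Equiv.Perm (Fin k)) (Z : Finset (ℕ × ℕ)) (Q₀ : ℕ) : Finset (Fin k) :=
  {u | Q₀ ≤ (π u).val ∧ ∃ z ∈ Z, u.val < z.1 ∧ (π u).val < z.2}

lemma stairRegion_insert_of_le (π : Equiv.Perm (Fin k)) (Z : Finset (ℕ × ℕ)) {P Q Q₀ : ℕ}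
    (hQ : Q ≤ Q₀) : stairRegion π (insert (P, Q) Z) Q₀ = stairRegion π Z Q₀ := by
  unfold stairRegion
  refine filter_congr fun u _ => ?_
  simp only [mem_insert, exists_eq_or_imp]
  exact and_congr_right fun hu => or_iff_right (by omega)

lemma card_stairRegion_insert (π : Equiv.Perm (Fin k)) {Z : Finset (ℕ × ℕ)} {P Q Q₀ : ℕ}
    (hP : ∀ z ∈ Z, z.1 ≤ P) (hQ : Q₀ ≤ Q) :
    #(stairRegion π (insert (P, Q) Z) Q₀) + rankCount π P Q₀ =
      rankCount π P Q + #(stairRegion π Z Q) := by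
  unfold stairRegion rankCount
  rw [← card_union_of_disjoint, ← card_union_of_disjoint]
  · congr 1
    ext u
    simp only [mem_union, mem_filter, mem_univ, true_and, mem_insert, exists_eq_or_imp]
    constructor
    · rintro (⟨hQ₀u, hu | ⟨z, hz, hzu⟩⟩ | hu)
      · omega
      · by_cases hQu : (π u).val < Q
        · exact Or.inl ⟨by have := hP z hz; omega, hQu⟩
        · exact Or.inr ⟨by omega, z, hz, hzu⟩
      · omega
    · rintro (hu | ⟨hQu, z, hz, hzu⟩)
      · by_cases hQ₀u : Q₀ ≤ (π u).val
        · exact Or.inl ⟨hQ₀u, Or.inl hu⟩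
        · exact Or.inr ⟨hu.1, by omega⟩
      · exact Or.inl ⟨by omega, Or.inr ⟨z, hz, hzu⟩⟩
  all_goals
    refine disjoint_filter.mpr fun u _ hu hu' => ?_
    omega

lemma card_stairRegion_le {τ σ : Equiv.Perm (Fin k)} (h : BruhatLE τ σ) (Z : Finset (ℕ × ℕ))
    (hZ : ∀ z ∈ Z, rankCount σ z.1 z.2 = rankCount τ z.1 z.2) (Q₀ : ℕ) :
    #(stairRegion τ Z Q₀) ≤ #(stairRegion σ Z Q₀) := by
  induction Z using Finset.induction_on_max_value (ι := ℕ × ℕ) (f := Prod.fst) generalizing Q₀ with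
  | empty => simp [stairRegion]
  | insert z Z _ hmax ih =>
    obtain ⟨P, Q⟩ := z
    have ih' := ih fun z hz => hZ z (mem_insert_of_mem hz)
    rcases le_total Q Q₀ with hQ | hQ
    · simpa only [stairRegion_insert_of_le _ _ hQ] using ih' Q₀
    · have hτ := card_stairRegion_insert τ (P := P) hmax hQ
      have hσ := card_stairRegion_insert σ (P := P) hmax hQ
      have htight : rankCount σ P Q = rankCount τ P Q := hZ _ (mem_insert_self _ _)
      have := bruhatLE_iff_rankCount_le.mp h P Q₀
      have := ih' Q
      omega

lemma card_lt_and_lt_add_card_lt_and_gt (π : Equiv.Perm (Fin k)) (i : Fin k) :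
    #{r | r < i ∧ π r < π i} + #{r | r < i ∧ π i < π r} = i := by
  have hunion : ({r | r < i ∧ π r < π i} : Finset (Fin k)) ∪
      ({r | r < i ∧ π i < π r} : Finset (Fin k)) = Iio i := by
    ext r
    simp only [mem_union, mem_filter, mem_univ, true_and, mem_Iio]
    constructor
    · rintro (hr | hr) <;> exact hr.1
    · intro hr
      rcases lt_or_gt_of_ne (π.injective.ne hr.ne) with hπ | hπ
      exacts [Or.inl ⟨hr, hπ⟩, Or.inr ⟨hr, hπ⟩]
  rw [← card_union_of_disjoint, hunion, Fin.card_Iio]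
  exact disjoint_filter.mpr fun r _ hr hr' => lt_asymm hr.2 hr'.2

lemma card_left_inversions_le {σ₀ σ : Equiv.Perm (Fin k)} (h : BruhatLE σ₀ σ) {i : Fin k}
    (hi : σ i = σ₀ i) :
    #{r | r < i ∧ σ i < σ r} ≤ #{j | j < i ∧ BruhatLE (σ₀ * Equiv.swap i j) σ} := by
  set Z : Finset (ℕ × ℕ) := {z ∈ range (i + 1) ×ˢ range ((σ₀ i).val + 1) |
    rankCount σ z.1 z.2 = rankCount σ₀ z.1 z.2}
  have hZ : ∀ z ∈ Z, rankCount σ z.1 z.2 = rankCount σ₀ z.1 z.2 := fun z hz => (mem_filter.mp hz).2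
  have hgood : ({j | j < i ∧ σ₀ i < σ₀ j} : Finset (Fin k)) ∪
      (({j | j < i ∧ σ₀ j < σ₀ i} : Finset (Fin k)) \ stairRegion σ₀ Z 0) ⊆
      ({j | j < i ∧ BruhatLE (σ₀ * Equiv.swap i j) σ} : Finset (Fin k)) := by
    intro j hj
    simp only [mem_union, mem_sdiff, mem_filter, mem_univ, true_and] at hj ⊢
    rw [Equiv.swap_comm]
    rcases hj with ⟨hji, hv⟩ | ⟨⟨hji, hv⟩, hj⟩
    · exact ⟨hji, (bruhatLE_mul_swap_of_gt σ₀ hji hv).trans h⟩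
    · refine ⟨hji, bruhatLE_mul_swap_of_rankCount_lt h hji hv fun P Q hP hPi hQ hQi => ?_⟩
      refine (bruhatLE_iff_rankCount_le.mp h P Q).lt_of_ne fun htight => hj ?_
      simp only [stairRegion, mem_filter, mem_univ, true_and]
      refine ⟨Nat.zero_le _, (P, Q), mem_filter.mpr ⟨?_, htight⟩, hP, hQ⟩
      simp only [mem_product, mem_range]
      omega
  have hstair : stairRegion σ Z 0 ⊆ ({r | r < i ∧ σ r < σ i} : Finset (Fin k)) := by
    intro u hu
    obtain ⟨-, z, hz, hu₁, hu₂⟩ := (mem_filter.mp hu).2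
    simp only [Z, mem_filter, mem_product, mem_range] at hz
    simp only [mem_filter, mem_univ, true_and, hi]
    omega
  have hdisj : Disjoint ({j | j < i ∧ σ₀ i < σ₀ j} : Finset (Fin k))
      (({j | j < i ∧ σ₀ j < σ₀ i} : Finset (Fin k)) \ stairRegion σ₀ Z 0) :=
    disjoint_filter.mpr (fun j _ hj hj' => lt_asymm hj.2 hj'.2) |>.mono_right sdiff_subset
  have hgood_card := card_le_card hgood
  rw [card_union_of_disjoint hdisj] at hgood_card
  have hbad := le_card_sdiff (stairRegion σ₀ Z 0) ({j | j < i ∧ σ₀ j < σ₀ i} : Finset (Fin k))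
  have hstair₀ := card_stairRegion_le h Z hZ 0
  have hstair_card := card_le_card hstair
  have hsplit₀ := card_lt_and_lt_add_card_lt_and_gt σ₀ i
  have hsplit := card_lt_and_lt_add_card_lt_and_gt σ i
  omega

def revConj (π : Equiv.Perm (Fin k)) : Equiv.Perm (Fin k) :=
  Fin.revPerm * π * Fin.revPerm

lemma revConj_apply (π : Equiv.Perm (Fin k)) (u : Fin k) : revConj π u = (π u.rev).rev := rfl

lemma revConj_revConj (π : Equiv.Perm (Fin k)) : revConj (revConj π) = π := by
  ext u
  simp [revConj_apply]

lemma revConj_mul_swap (π : Equiv.Perm (Fin k)) (a b : Fin k) :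
    revConj (π * Equiv.swap a b) = revConj π * Equiv.swap a.rev b.rev := by
  ext u
  simp only [revConj_apply, Equiv.Perm.mul_apply, Equiv.swap_apply_def, Fin.rev_eq_iff]
  split_ifs <;> simp_all

lemma rankCount_revConj (π : Equiv.Perm (Fin k)) {P Q : ℕ} (hP : P ≤ k) (hQ : Q ≤ k) :
    rankCount (revConj π) P Q + k = rankCount π (k - P) (k - Q) + P + Q := by
  have hreindex : rankCount (revConj π) P Q = #{v | ¬ v.val < k - P ∧ ¬ (π v).val < k - Q} := by
    rw [rankCount, ← card_filter_comp_perm Fin.revPerm]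
    refine congrArg card (filter_congr fun v _ => ?_)
    simp only [Fin.revPerm_apply, revConj_apply, Fin.rev_rev, Fin.val_rev]
    omega
  have hA : #{v : Fin k | v.val < k - P} = k - P := by
    rw [Fin.card_filter_val_lt]; omega
  have hB : #{v : Fin k | (π v).val < k - Q} = k - Q := by
    rw [card_filter_comp_perm π (fun v => v.val < k - Q), Fin.card_filter_val_lt]; omega
  have hunion := card_union_add_card_inter ({v | v.val < k - P} : Finset (Fin k))
    {v | (π v).val < k - Q}
  have hcompl := card_filter_add_card_filter_not (s := univ)
    (fun v : Fin k => v.val < k - P ∨ (π v).val < k - Q)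
  rw [← filter_or, ← filter_and] at hunion
  simp only [not_or] at hcompl
  rw [hreindex, rankCount]
  simp only [card_univ, Fintype.card_fin] at hcompl
  omega

lemma BruhatLE.revConj {τ σ : Equiv.Perm (Fin k)} (h : BruhatLE τ σ) :
    BruhatLE (revConj τ) (revConj σ) := by
  intro p q
  rw [rankFn_eq_rankCount, rankFn_eq_rankCount]
  have hτ := rankCount_revConj τ (P := p + 1) (Q := q + 1) p.isLt q.isLt
  have hσ := rankCount_revConj σ (P := p + 1) (Q := q + 1) p.isLt q.isLt
  have := bruhatLE_iff_rankCount_le.mp h (k - (p + 1)) (k - (q + 1))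
  omega

lemma bruhatLE_revConj_iff {τ σ : Equiv.Perm (Fin k)} :
    BruhatLE (revConj τ) (revConj σ) ↔ BruhatLE τ σ :=
  ⟨fun h => by simpa only [revConj_revConj] using h.revConj, BruhatLE.revConj⟩

lemma card_right_inversions_le {σ₀ σ : Equiv.Perm (Fin k)} (h : BruhatLE σ₀ σ) {i : Fin k}
    (hi : σ i = σ₀ i) :
    #{r | i < r ∧ σ r < σ i} ≤ #{j | i < j ∧ BruhatLE (σ₀ * Equiv.swap i j) σ} := by
  have hleft := card_left_inversions_le h.revConj (i := i.rev) (by simp [revConj_apply, hi])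
  rw [← card_filter_comp_perm Fin.revPerm, ← card_filter_comp_perm Fin.revPerm
    (fun j => j < i.rev ∧ _)] at hleft
  convert hleft using 3
  · simp only [Fin.revPerm_apply, revConj_apply, Fin.rev_rev, Fin.rev_lt_rev]
  · rw [Fin.revPerm_apply, Fin.rev_lt_rev, ← revConj_mul_swap, bruhatLE_revConj_iff]

lemma card_ne_le_ncard_transpositions (σ₀ σ : Equiv.Perm (Fin k)) (i : Fin k) :
    #{j | j ≠ i ∧ BruhatLE (σ₀ * Equiv.swap i j) σ} ≤
      {t : Equiv.Perm (Fin k) | IsTransposition t ∧ t i ≠ i ∧ BruhatLE (σ₀ * t) σ}.ncard := by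
  rw [← Set.ncard_coe_finset]
  refine Set.ncard_le_ncard_of_injOn (Equiv.swap i) (fun j hj => ?_) (fun a _ b _ hab => ?_)
    (Set.toFinite _)
  · simp only [coe_filter, mem_univ, true_and] at hj
    exact ⟨⟨i, j, hj.1.symm, rfl⟩, by simpa using hj.1, hj.2⟩
  · simpa using congrArg (· i) hab

end

theorem statement8 {k : ℕ} (σ0 σ : Equiv.Perm (Fin k)) (h : BruhatLE σ0 σ)
    (i : Fin k) (hi : σ i = σ0 i) :
    (Finset.univ.filter fun r : Fin k => r < i ∧ σ i < σ r).card +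
      (Finset.univ.filter fun r : Fin k => i < r ∧ σ r < σ i).card ≤
    {t : Equiv.Perm (Fin k) | IsTransposition t ∧ t i ≠ i ∧ BruhatLE (σ0 * t) σ}.ncard := by
  calc _ ≤ #{j | j < i ∧ BruhatLE (σ0 * Equiv.swap i j) σ} +
          #{j | i < j ∧ BruhatLE (σ0 * Equiv.swap i j) σ} :=
        add_le_add (card_left_inversions_le h hi) (card_right_inversions_le h hi)
    _ = #{j | j ≠ i ∧ BruhatLE (σ0 * Equiv.swap i j) σ} := by
        rw [← card_union_of_disjoint (disjoint_filter.mpr fun j _ hj hj' => lt_asymm hj.1 hj'.1),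
          ← filter_or]
        refine congrArg card (filter_congr fun j _ => ?_)
        rw [ne_iff_lt_or_gt, or_and_right]
    _ ≤ _ := card_ne_le_ncard_transpositions σ0 σ i
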